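/- arXiv:2301.06440 — 3 statements merged into one kernel-verified Lean document; each statement's English description precedes it below -/
import Mathlib

section
/- For any field K of characteristic zero and any nonzero tuple (x₁, x₂, x₃, x₄) ∈ K⁴ satisfying the six defining equations of the curve X, the triple (X, Y, Z) = (x₂x₃ + x₃x₄, x₂² + x₂x₄ − x₃x₄ + x₄², x₃x₄) satisfies the Weierstrass relation Y²Z + XYZ + YZ² = X³ − X²Z. (In other words, the map ψ(x₁ : x₂ : x₃ : x₄) = (x₂x₃ + x₃x₄ : x₂² + x₂x₄ − x₃x₄ + x₄² : x₃x₄) sends points of X to points of the elliptic curve E : Y²Z + XYZ + YZ² = X³ − X²Z.) -/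
/-- The six defining homogeneous equations of the model of the modular curve `X₀(53)`
in `ℙ³` with coordinates `x₁, x₂, x₃, x₄`. -/
def OnX {K : Type*} [Field K] (x₁ x₂ x₃ x₄ : K) : Prop :=
  x₁ ^ 2 - x₂ ^ 2 + 2 * x₂ * x₃ - 6 * x₂ * x₄ + 11 * x₃ ^ 2 - 6 * x₃ * x₄ - x₄ ^ 2 = 0 ∧
  x₁ ^ 3 - x₁ * x₂ ^ 2 + 2 * x₁ * x₂ * x₃ - 6 * x₁ * x₂ * x₄ + 11 * x₁ * x₃ ^ 2
    - 6 * x₁ * x₃ * x₄ - x₁ * x₄ ^ 2 = 0 ∧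
  x₁ ^ 2 * x₂ - x₂ ^ 3 + 2 * x₂ ^ 2 * x₃ + 5 * x₂ * x₃ ^ 2 + 5 * x₂ * x₄ ^ 2
    - 6 * x₃ ^ 2 * x₄ + 6 * x₄ ^ 3 = 0 ∧
  x₁ ^ 2 * x₃ - x₂ ^ 2 * x₃ + 2 * x₂ * x₃ ^ 2 - 6 * x₂ * x₃ * x₄ + 11 * x₃ ^ 3
    - 6 * x₃ ^ 2 * x₄ - x₃ * x₄ ^ 2 = 0 ∧
  x₁ ^ 2 * x₄ - x₂ * x₃ ^ 2 + 3 * x₂ * x₃ * x₄ - 5 * x₂ * x₄ ^ 2 + 10 * x₃ ^ 2 * x₄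
    - 6 * x₃ * x₄ ^ 2 = 0 ∧
  x₂ ^ 2 * x₄ - x₂ * x₃ ^ 2 + x₂ * x₃ * x₄ + x₂ * x₄ ^ 2 - x₃ ^ 2 * x₄ + x₄ ^ 3 = 0

theorem weierstrass_psi_sub_eq_mul {R : Type*} [CommRing R] (x₂ x₃ x₄ : R) :
    (x₂ ^ 2 + x₂ * x₄ - x₃ * x₄ + x₄ ^ 2) ^ 2 * (x₃ * x₄)
      + (x₂ * x₃ + x₃ * x₄) * (x₂ ^ 2 + x₂ * x₄ - x₃ * x₄ + x₄ ^ 2) * (x₃ * x₄)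
      + (x₂ ^ 2 + x₂ * x₄ - x₃ * x₄ + x₄ ^ 2) * (x₃ * x₄) ^ 2
      - ((x₂ * x₃ + x₃ * x₄) ^ 3 - (x₂ * x₃ + x₃ * x₄) ^ 2 * (x₃ * x₄))
      = x₃ * (x₂ ^ 2 + x₂ * x₄ + x₄ ^ 2)
        * (x₂ ^ 2 * x₄ - x₂ * x₃ ^ 2 + x₂ * x₃ * x₄ + x₂ * x₄ ^ 2 - x₃ ^ 2 * x₄ + x₄ ^ 3) := by
  ring

theorem psi_maps_X_to_E_general {K : Type*} [Field K] (x₁ x₂ x₃ x₄ : K) (hX : OnX x₁ x₂ x₃ x₄) :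
    (x₂ ^ 2 + x₂ * x₄ - x₃ * x₄ + x₄ ^ 2) ^ 2 * (x₃ * x₄)
      + (x₂ * x₃ + x₃ * x₄) * (x₂ ^ 2 + x₂ * x₄ - x₃ * x₄ + x₄ ^ 2) * (x₃ * x₄)
      + (x₂ ^ 2 + x₂ * x₄ - x₃ * x₄ + x₄ ^ 2) * (x₃ * x₄) ^ 2
      = (x₂ * x₃ + x₃ * x₄) ^ 3 - (x₂ * x₃ + x₃ * x₄) ^ 2 * (x₃ * x₄) := by
  rw [← sub_eq_zero, weierstrass_psi_sub_eq_mul, hX.2.2.2.2.2, mul_zero]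

/-- The map `ψ(x₁ : x₂ : x₃ : x₄) = (x₂x₃ + x₃x₄ : x₂² + x₂x₄ − x₃x₄ + x₄² : x₃x₄)` sends
points of `X` to points of the elliptic curve `E : Y²Z + XYZ + YZ² = X³ − X²Z`. -/
theorem psi_maps_X_to_E {K : Type*} [Field K] [CharZero K] (x₁ x₂ x₃ x₄ : K)
    (hne : ¬(x₁ = 0 ∧ x₂ = 0 ∧ x₃ = 0 ∧ x₄ = 0)) (hX : OnX x₁ x₂ x₃ x₄) :
    (x₂ ^ 2 + x₂ * x₄ - x₃ * x₄ + x₄ ^ 2) ^ 2 * (x₃ * x₄)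
      + (x₂ * x₃ + x₃ * x₄) * (x₂ ^ 2 + x₂ * x₄ - x₃ * x₄ + x₄ ^ 2) * (x₃ * x₄)
      + (x₂ ^ 2 + x₂ * x₄ - x₃ * x₄ + x₄ ^ 2) * (x₃ * x₄) ^ 2
      = (x₂ * x₃ + x₃ * x₄) ^ 3 - (x₂ * x₃ + x₃ * x₄) ^ 2 * (x₃ * x₄) :=
  psi_maps_X_to_E_general x₁ x₂ x₃ x₄ hX
end

section
/- Let d be a squarefree integer with d ≠ 1, let K = ℚ(√d), and let σ be the nontrivial element of Gal(K/ℚ). Let w : ℙ³ → ℙ³ be the involution (x₁ : x₂ : x₃ : x₄) ↦ (−x₁ : x₂ : x₃ : x₄). If P ∈ ℙ³(K) satisfies σ(P) = w(P) (as projective points), then P admits homogeneous coordinates of the form (b√d : a₂ : a₃ : a₄) with b, a₂, a₃, a₄ ∈ ℚ. -/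
/-!
A point fixed by `σ ∘ w` gives a multiplier `μ` with `σ y = ± μ y` on the coordinates; applying
`σ` twice to a nonzero coordinate shows `σ μ * μ = 1`. Hilbert 90 for the quadratic extension then
writes `μ = σ t / t`, and dividing the coordinates by `t` makes the last three fixed by `σ`, hence
rational, and the first one negated by `σ`, hence a rational multiple of `√d`.
-/

section

variable {F K : Type*} [Field F] [Field K] [Algebra F K]

theorem involutive_of_apply_eq_neg {σ : K →+* K} {s : K}
    (hσF : ∀ a : F, σ (algebraMap F K a) = algebraMap F K a) (hσ : σ s = -s)
    (hspan : ∀ y : K, ∃ a b : F, y = algebraMap F K a + algebraMap F K b * s) :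
    Function.Involutive σ := by
  intro y
  obtain ⟨a, b, rfl⟩ := hspan y
  simp [hσF, hσ]

theorem exists_eq_algebraMap_of_apply_eq_self {σ : K →+* K} {s : K}
    (hσF : ∀ a : F, σ (algebraMap F K a) = algebraMap F K a) (hσ : σ s = -s)
    (hspan : ∀ y : K, ∃ a b : F, y = algebraMap F K a + algebraMap F K b * s)
    (h2 : (2 : K) ≠ 0) {y : K} (hy : σ y = y) : ∃ a : F, y = algebraMap F K a := by
  obtain ⟨a, b, rfl⟩ := hspan y
  simp only [map_add, map_mul, hσF, hσ] at hy
  have hbs : 2 * (algebraMap F K b * s) = 0 := by linear_combination -hy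
  exact ⟨a, by rw [(mul_eq_zero.mp hbs).resolve_left h2, add_zero]⟩

theorem exists_eq_algebraMap_mul_of_apply_eq_neg {σ : K →+* K} {s : K}
    (hσF : ∀ a : F, σ (algebraMap F K a) = algebraMap F K a) (hσ : σ s = -s)
    (hspan : ∀ y : K, ∃ a b : F, y = algebraMap F K a + algebraMap F K b * s)
    (h2 : (2 : K) ≠ 0) {y : K} (hy : σ y = -y) : ∃ b : F, y = algebraMap F K b * s := by
  obtain ⟨a, b, rfl⟩ := hspan y
  simp only [map_add, map_mul, hσF, hσ] at hy
  have ha : 2 * algebraMap F K a = 0 := by linear_combination hy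
  exact ⟨b, by rw [(mul_eq_zero.mp ha).resolve_left h2, zero_add]⟩

theorem mul_apply_eq_one_of_apply_eq_mul {σ : K →+* K} (hσσ : Function.Involutive σ)
    {μ y : K} (hy0 : y ≠ 0) (hy : σ y = μ * y) : σ μ * μ = 1 := by
  refine mul_right_cancel₀ hy0 ?_
  calc σ μ * μ * y = σ μ * σ y := by rw [hy, mul_assoc]
    _ = σ (σ y) := by rw [← map_mul, ← hy]
    _ = 1 * y := by rw [hσσ y, one_mul]

/-- Hilbert 90 for an involution that negates some nonzero element. -/
theorem exists_ne_zero_apply_eq_mul {σ : K →+* K} (hσσ : Function.Involutive σ) {s : K}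
    (hs0 : s ≠ 0) (hσ : σ s = -s) {μ : K} (hμ : σ μ * μ = 1) : ∃ t ≠ 0, σ t = μ * t := by
  by_cases h : 1 + σ μ = 0
  · have hμ1 : μ = -1 := by
      rw [← hσσ μ, eq_neg_of_add_eq_zero_right h, map_neg, map_one]
    exact ⟨s, hs0, by rw [hσ, hμ1, neg_one_mul]⟩
  · refine ⟨1 + σ μ, h, ?_⟩
    rw [map_add, map_one, hσσ μ]
    linear_combination -hμ

theorem exists_eq_mul_algebraMap {σ : K →+* K} {s : K}
    (hσF : ∀ a : F, σ (algebraMap F K a) = algebraMap F K a) (hσ : σ s = -s)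
    (hspan : ∀ y : K, ∃ a b : F, y = algebraMap F K a + algebraMap F K b * s)
    (h2 : (2 : K) ≠ 0) {μ t y : K} (hμ : μ ≠ 0) (ht0 : t ≠ 0) (ht : σ t = μ * t)
    (hy : σ y = μ * y) : ∃ a : F, y = t * algebraMap F K a := by
  obtain ⟨a, ha⟩ := exists_eq_algebraMap_of_apply_eq_self hσF hσ hspan h2 (y := y / t)
    (by rw [map_div₀, ht, hy, mul_div_mul_left _ _ hμ])
  exact ⟨a, by rw [← ha, mul_div_cancel₀ y ht0]⟩

theorem exists_eq_mul_algebraMap_mul {σ : K →+* K} {s : K}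
    (hσF : ∀ a : F, σ (algebraMap F K a) = algebraMap F K a) (hσ : σ s = -s)
    (hspan : ∀ y : K, ∃ a b : F, y = algebraMap F K a + algebraMap F K b * s)
    (h2 : (2 : K) ≠ 0) {μ t y : K} (hμ : μ ≠ 0) (ht0 : t ≠ 0) (ht : σ t = μ * t)
    (hy : σ y = μ * -y) : ∃ b : F, y = t * (algebraMap F K b * s) := by
  obtain ⟨b, hb⟩ := exists_eq_algebraMap_mul_of_apply_eq_neg hσF hσ hspan h2 (y := y / t)
    (by rw [map_div₀, ht, hy, mul_div_mul_left _ _ hμ, neg_div])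
  exact ⟨b, by rw [← hb, mul_div_cancel₀ y ht0]⟩

end

theorem sigma_eq_w_coords_general (d : ℤ) (hd : Squarefree d)
    {K : Type*} [Field K] [Algebra ℚ K] (s : K) (hs : s ^ 2 = (d : K))
    (hspan : ∀ x : K, ∃ a b : ℚ, x = algebraMap ℚ K a + algebraMap ℚ K b * s)
    (σ : K →+* K) (hσ : σ s = -s)
    (x : Fin 4 → K) (hx : x ≠ 0)
    (hfix : ∃ μ : K, μ ≠ 0 ∧ σ (x 0) = μ * (-(x 0)) ∧ σ (x 1) = μ * x 1 ∧
      σ (x 2) = μ * x 2 ∧ σ (x 3) = μ * x 3) :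
    ∃ (lam : K) (b a₂ a₃ a₄ : ℚ), lam ≠ 0 ∧
      x 0 = lam * (algebraMap ℚ K b * s) ∧
      x 1 = lam * algebraMap ℚ K a₂ ∧
      x 2 = lam * algebraMap ℚ K a₃ ∧
      x 3 = lam * algebraMap ℚ K a₄ := by
  obtain ⟨μ, hμ, h0, h1, h2, h3⟩ := hfix
  have : CharZero K := algebraRat.charZero K
  have hσF : ∀ a : ℚ, σ (algebraMap ℚ K a) = algebraMap ℚ K a := σ.map_rat_algebraMap
  have hs0 : s ≠ 0 := by
    rintro rfl
    exact hd.ne_zero (by simpa using hs.symm)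
  have hσσ := involutive_of_apply_eq_neg hσF hσ hspan
  have hnorm : σ μ * μ = 1 := by
    obtain ⟨i, hi⟩ := Function.ne_iff.mp hx
    fin_cases i
    · simpa using mul_apply_eq_one_of_apply_eq_mul hσσ hi (h0.trans ((neg_mul_comm μ (x 0)).symm))
    · exact mul_apply_eq_one_of_apply_eq_mul hσσ hi h1
    · exact mul_apply_eq_one_of_apply_eq_mul hσσ hi h2
    · exact mul_apply_eq_one_of_apply_eq_mul hσσ hi h3
  obtain ⟨t, ht0, ht⟩ := exists_ne_zero_apply_eq_mul hσσ hs0 hσ hnorm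
  obtain ⟨b, hb⟩ := exists_eq_mul_algebraMap_mul hσF hσ hspan two_ne_zero hμ ht0 ht h0
  obtain ⟨a₂, ha₂⟩ := exists_eq_mul_algebraMap hσF hσ hspan two_ne_zero hμ ht0 ht h1
  obtain ⟨a₃, ha₃⟩ := exists_eq_mul_algebraMap hσF hσ hspan two_ne_zero hμ ht0 ht h2
  obtain ⟨a₄, ha₄⟩ := exists_eq_mul_algebraMap hσF hσ hspan two_ne_zero hμ ht0 ht h3
  exact ⟨t, b, a₂, a₃, a₄, ht0, hb, ha₂, ha₃, ha₄⟩

/-- Let `K = ℚ(√d)` with `d` squarefree, `d ≠ 1`, let `σ` be the nontrivial element of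
`Gal(K/ℚ)` (determined by `σ(√d) = -√d`), and let `w : ℙ³ → ℙ³` be the involution
`(x₁ : x₂ : x₃ : x₄) ↦ (−x₁ : x₂ : x₃ : x₄)`.  If a point `P ∈ ℙ³(K)`, given by a nonzero
coordinate tuple `x`, satisfies `σ(P) = w(P)` as projective points, then `P` admits
homogeneous coordinates of the form `(b√d : a₂ : a₃ : a₄)` with `b, a₂, a₃, a₄ ∈ ℚ`. -/
theorem sigma_eq_w_coords (d : ℤ) (hd : Squarefree d) (hd1 : d ≠ 1)
    {K : Type*} [Field K] [Algebra ℚ K] (s : K) (hs : s ^ 2 = (d : K))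
    (hspan : ∀ x : K, ∃ a b : ℚ, x = algebraMap ℚ K a + algebraMap ℚ K b * s)
    (σ : K →+* K) (hσ : σ s = -s)
    (x : Fin 4 → K) (hx : x ≠ 0)
    (hfix : ∃ μ : K, μ ≠ 0 ∧ σ (x 0) = μ * (-(x 0)) ∧ σ (x 1) = μ * x 1 ∧
      σ (x 2) = μ * x 2 ∧ σ (x 3) = μ * x 3) :
    ∃ (lam : K) (b a₂ a₃ a₄ : ℚ), lam ≠ 0 ∧
      x 0 = lam * (algebraMap ℚ K b * s) ∧
      x 1 = lam * algebraMap ℚ K a₂ ∧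
      x 2 = lam * algebraMap ℚ K a₃ ∧
      x 3 = lam * algebraMap ℚ K a₄ :=
  sigma_eq_w_coords_general d hd s hs hspan σ hσ x hx hfix
end

section
/- For each d ∈ {−43, −11, −7, −1}, there exists a point of X defined over the quadratic field ℚ(√d) that is not defined over ℚ; that is, X(ℚ(√d)) ≠ X(ℚ). -/
/-- A point of `ℙ³` with coordinates in a field `K ⊇ ℚ` is defined over `ℚ` if it admits
homogeneous coordinates all lying in `ℚ`. -/
def DefinedOverQ {K : Type*} [Field K] [Algebra ℚ K] (x : Fin 4 → K) : Prop :=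
  ∃ lam : K, lam ≠ 0 ∧ ∃ q : Fin 4 → ℚ, ∀ i, x i = lam * algebraMap ℚ K (q i)

/-! The substitution `x₁ ↦ -x₁` preserves `X`, and the quotient is the plane cubic
`quotientCubic = 0` in the coordinates `x₂, x₃, x₄`: a point of `X` is exactly a point of this
cubic together with a square root `x₁` of the quadric `branchQuadric` at it. Hence every rational
point `y` of the cubic at which `branchQuadric y = d c²` lifts to the point `(c√d : y)` of `X`,
which is defined over `ℚ(√d)` but not over `ℚ` when `d < 0`. The rational points `(2 : 3 : 2)`,
`(0 : 1 : 0)`, `(1 : -1 : 1)` and `(0 : 1 : 1)` of the cubic give `d = -43, -11, -7, -1`. -/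

section

variable {R S : Type*} [CommRing R] [CommRing S]

def branchQuadric (y₂ y₃ y₄ : R) : R :=
  y₂ ^ 2 - 2 * y₂ * y₃ + 6 * y₂ * y₄ - 11 * y₃ ^ 2 + 6 * y₃ * y₄ + y₄ ^ 2

def quotientCubic (y₂ y₃ y₄ : R) : R :=
  y₂ ^ 2 * y₄ - y₂ * y₃ ^ 2 + y₂ * y₃ * y₄ + y₂ * y₄ ^ 2 - y₃ ^ 2 * y₄ + y₄ ^ 3

theorem map_branchQuadric (f : R →+* S) (y₂ y₃ y₄ : R) :
    f (branchQuadric y₂ y₃ y₄) = branchQuadric (f y₂) (f y₃) (f y₄) := by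
  simp only [branchQuadric, map_add, map_sub, map_mul, map_pow, map_ofNat]

theorem map_quotientCubic (f : R →+* S) (y₂ y₃ y₄ : R) :
    f (quotientCubic y₂ y₃ y₄) = quotientCubic (f y₂) (f y₃) (f y₄) := by
  simp only [quotientCubic, map_add, map_sub, map_mul, map_pow]

end

section

variable {K : Type*} [Field K]

theorem onX_iff {x₁ x₂ x₃ x₄ : K} :
    OnX x₁ x₂ x₃ x₄ ↔ x₁ ^ 2 = branchQuadric x₂ x₃ x₄ ∧ quotientCubic x₂ x₃ x₄ = 0 := by
  unfold OnX branchQuadric quotientCubic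
  constructor
  · rintro ⟨h₁, -, -, -, -, h₆⟩
    exact ⟨by linear_combination h₁, h₆⟩
  · rintro ⟨hF, hG⟩
    refine ⟨?_, ?_, ?_, ?_, ?_, hG⟩
    · linear_combination hF
    · linear_combination x₁ * hF
    · linear_combination x₂ * hF + 6 * hG
    · linear_combination x₃ * hF
    · linear_combination x₄ * hF + hG

variable [Algebra ℚ K]

theorem DefinedOverQ.div_mem_range {x : Fin 4 → K} (hx : DefinedOverQ x) (i j : Fin 4) :
    x i / x j ∈ Set.range (algebraMap ℚ K) := by
  obtain ⟨lam, hlam, q, hq⟩ := hx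
  refine ⟨q i / q j, ?_⟩
  rw [map_div₀, hq i, hq j, mul_div_mul_left _ _ hlam]

theorem not_mem_range_algebraMap_of_sq_eq_neg {s : K} {d : ℚ} (hs : s ^ 2 = algebraMap ℚ K d)
    (hd : d < 0) : s ∉ Set.range (algebraMap ℚ K) := by
  rintro ⟨t, rfl⟩
  have ht : t ^ 2 = d := (algebraMap ℚ K).injective (by rw [map_pow, hs])
  nlinarith [sq_nonneg t]

theorem not_definedOverQ_of_eq_mul {x : Fin 4 → K} {s : K}
    (hs : s ∉ Set.range (algebraMap ℚ K)) {i j : Fin 4} {c r : ℚ} (hc : c ≠ 0) (hr : r ≠ 0)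
    (hi : x i = algebraMap ℚ K c * s) (hj : x j = algebraMap ℚ K r) : ¬ DefinedOverQ x := by
  intro hx
  obtain ⟨t, ht⟩ := hx.div_mem_range i j
  refine hs ⟨t * r / c, ?_⟩
  have hc' : algebraMap ℚ K c ≠ 0 := (map_ne_zero _).mpr hc
  have hr' : algebraMap ℚ K r ≠ 0 := (map_ne_zero _).mpr hr
  rw [map_div₀, map_mul, ht, hi, hj]
  field_simp

theorem exists_onX_not_definedOverQ {d : ℚ} (hd : d < 0) {s : K}
    (hs : s ^ 2 = algebraMap ℚ K d) {c : ℚ} (hc : c ≠ 0) (a b e : ℚ)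
    (hG : quotientCubic a b e = 0) (hF : branchQuadric a b e = d * c ^ 2) :
    ∃ x : Fin 4 → K, x ≠ 0 ∧ OnX (x 0) (x 1) (x 2) (x 3) ∧ ¬ DefinedOverQ x := by
  set x : Fin 4 → K := ![algebraMap ℚ K c * s, algebraMap ℚ K a, algebraMap ℚ K b,
    algebraMap ℚ K e]
  have hs' := not_mem_range_algebraMap_of_sq_eq_neg hs hd
  have hx₀ : x 0 ≠ 0 := mul_ne_zero ((map_ne_zero _).mpr hc) fun h ↦ hs' ⟨0, by rw [h, map_zero]⟩
  refine ⟨x, fun h ↦ hx₀ (congrFun h 0), ?_, ?_⟩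
  · refine onX_iff.mpr ⟨?_, ?_⟩
    · have hF' := congrArg (algebraMap ℚ K) hF
      rw [map_branchQuadric, map_mul, map_pow] at hF'
      simp only [x, Matrix.cons_val]
      linear_combination algebraMap ℚ K c ^ 2 * hs - hF'
    · simp only [x, Matrix.cons_val]
      rw [← map_quotientCubic, hG, map_zero]
  · obtain ⟨j, r, hr, hxj⟩ : ∃ j r, r ≠ 0 ∧ x j = algebraMap ℚ K r := by
      by_contra! h
      have ha : a = 0 := by_contra fun ha ↦ h 1 a ha rfl
      have hb : b = 0 := by_contra fun hb ↦ h 2 b hb rfl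
      have he : e = 0 := by_contra fun he ↦ h 3 e he rfl
      simp [branchQuadric, ha, hb, he, hc, hd.ne] at hF
    exact not_definedOverQ_of_eq_mul hs' hc hr (i := 0) rfl hxj

end

theorem X53_quadratic_points_exist_general (d : ℤ) (hdD : d ∈ ({-43, -11, -7, -1} : Set ℤ))
    {K : Type*} [Field K] [Algebra ℚ K] (s : K) (hs : s ^ 2 = (d : K)) :
    ∃ x : Fin 4 → K, x ≠ 0 ∧ OnX (x 0) (x 1) (x 2) (x 3) ∧ ¬ DefinedOverQ x := by
  rw [← map_intCast (algebraMap ℚ K)] at hs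
  simp only [Set.mem_insert_iff, Set.mem_singleton_iff] at hdD
  rcases hdD with rfl | rfl | rfl | rfl
  · exact exists_onX_not_definedOverQ (by norm_num) hs one_ne_zero 2 3 2
      (by norm_num [quotientCubic]) (by norm_num [branchQuadric])
  · exact exists_onX_not_definedOverQ (by norm_num) hs one_ne_zero 0 1 0
      (by norm_num [quotientCubic]) (by norm_num [branchQuadric])
  · exact exists_onX_not_definedOverQ (by norm_num) hs one_ne_zero 1 (-1) 1
      (by norm_num [quotientCubic]) (by norm_num [branchQuadric])
  · exact exists_onX_not_definedOverQ (by norm_num) hs two_ne_zero 0 1 1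
      (by norm_num [quotientCubic]) (by norm_num [branchQuadric])

/-- For each `d ∈ {−43, −11, −7, −1}`, there is a point of the model `X` of `X₀(53)` defined
over the quadratic field `ℚ(√d)` that is not defined over `ℚ`; that is,
`X(ℚ(√d)) ≠ X(ℚ)`. -/
theorem X53_quadratic_points_exist (d : ℤ) (hdD : d ∈ ({-43, -11, -7, -1} : Set ℤ))
    {K : Type*} [Field K] [Algebra ℚ K] (s : K) (hs : s ^ 2 = (d : K))
    (hspan : ∀ x : K, ∃ a b : ℚ, x = algebraMap ℚ K a + algebraMap ℚ K b * s) :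
    ∃ x : Fin 4 → K, x ≠ 0 ∧ OnX (x 0) (x 1) (x 2) (x 3) ∧ ¬ DefinedOverQ x :=
  X53_quadratic_points_exist_general d hdD s hs
end
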